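/- arXiv:2011.04991 — 2 statements merged into one kernel-verified Lean document; each statement's English description precedes it below -/
import Mathlib

section
/- Equivalence of discrete norms on the WG space: there exist positive constants C₁, C₂ independent of h such that for all (v_h, V_h) ∈ ℍ_h, C₁‖(v_h,V_h)‖²_{1,h} ≤ |||(v_h,V_h)|||²_h ≤ C₂‖(v_h,V_h)‖²_{1,h}, where ‖(v_h,V_h)‖²_{1,h} = Σ_T (‖∇v_0‖²_{L^2(T)} + h_T^{-1}‖Q_b v_0 − v_b‖²_{L^2(∂T)}) + Σ_l ‖v_b − V_{h,l}‖²_{L^2(e_l)} and |||(v_h,V_h)|||²_h = a_s(1,(v_h,V_h),(v_h,V_h)). -/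
open MeasureTheory Filter Topology
open scoped ENNReal NNReal

noncomputable section

abbrev Pt : Type := EuclideanSpace ℝ (Fin 2)

/-- partial derivative of a scalar field -/
def pd (φ : Pt → ℝ) (i : Fin 2) (x : Pt) : ℝ := fderiv ℝ φ x (EuclideanSpace.single i 1)

/-- divergence of a vector field on ℝ² -/
def div2 (g : Pt → Pt) (x : Pt) : ℝ := ∑ i, fderiv ℝ g x (EuclideanSpace.single i 1) i

/-- admissible test vector fields for the total variation -/
def IsTestField (Ω : Set Pt) (g : Pt → Pt) : Prop :=
  ContDiff ℝ 1 g ∧ HasCompactSupport g ∧ tsupport g ⊆ Ω ∧ ∀ x i, |g x i| ≤ 1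

/-- total variation of `q` on `Ω`, by duality -/
def TV (Ω : Set Pt) (q : Pt → ℝ) : ℝ≥0∞ :=
  ⨆ g ∈ {g | IsTestField Ω g}, ENNReal.ofReal (∫ x in Ω, q x * div2 g x)

def MemBV (Ω : Set Pt) (q : Pt → ℝ) : Prop := IntegrableOn q Ω ∧ TV Ω q < ⊤

/-- `du` is the weak gradient of `u` on `Ω` -/
def IsWeakGrad (Ω : Set Pt) (u : Pt → ℝ) (du : Pt → Pt) : Prop :=
  ∀ φ : Pt → ℝ, ContDiff ℝ 1 φ → HasCompactSupport φ → tsupport φ ⊆ Ω →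
    ∀ i, ∫ x in Ω, u x * pd φ i x = - ∫ x in Ω, du x i * φ x

/-- membership in H¹(Ω), represented by a pair (u, du) -/
def MemH1 (Ω : Set Pt) (u : Pt → ℝ) (du : Pt → Pt) : Prop :=
  MemLp u 2 (volume.restrict Ω) ∧ MemLp du 2 (volume.restrict Ω) ∧ IsWeakGrad Ω u du

/-- membership in ℍ = H¹(Ω) ⊗ ℝ^L_⋄ (with square-integrable electrode traces) -/
def MemHH (Ω : Set Pt) {L : ℕ} (e : Fin L → Set Pt) (u : Pt → ℝ) (du : Pt → Pt)
    (U : Fin L → ℝ) : Prop :=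
  MemH1 Ω u du ∧ (∀ l, MemLp u 2 (μH[1].restrict (e l))) ∧ ∑ l, U l = 0

/-- the CEM trilinear form a(σ,(u,U),(v,V)) -/
def aForm (Ω : Set Pt) {L : ℕ} (e : Fin L → Set Pt) (z : Fin L → ℝ) (σ : Pt → ℝ)
    (u : Pt → ℝ) (du : Pt → Pt) (U : Fin L → ℝ)
    (v : Pt → ℝ) (dv : Pt → Pt) (V : Fin L → ℝ) : ℝ :=
  (∫ x in Ω, σ x * ∑ i, du x i * dv x i) +
    ∑ l, (z l)⁻¹ * ∫ x in e l, (u x - U l) * (v x - V l) ∂μH[1]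

/-- (u,du,U) is a weak solution of the complete electrode model -/
def IsCEMSol (Ω : Set Pt) {L : ℕ} (e : Fin L → Set Pt) (z : Fin L → ℝ) (σ : Pt → ℝ)
    (I : Fin L → ℝ) (u : Pt → ℝ) (du : Pt → Pt) (U : Fin L → ℝ) : Prop :=
  MemHH Ω e u du U ∧
    ∀ v dv V, MemHH Ω e v dv V → aForm Ω e z σ u du U v dv V = ∑ l, I l * V l

/-- admissible conductivities -/
def MemA (Ω : Set Pt) (lam : ℝ) (σ : Pt → ℝ) : Prop :=
  MemBV Ω σ ∧ ∀ᵐ x ∂(volume.restrict Ω), lam ≤ σ x ∧ σ x ≤ lam⁻¹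

/-- geometric setting of the electrodes -/
def ElectrodeSetup (Ω : Set Pt) {L : ℕ} (e : Fin L → Set Pt) : Prop :=
  IsOpen Ω ∧ Bornology.IsBounded Ω ∧ IsPreconnected Ω ∧
  (∀ l, e l ⊆ frontier Ω) ∧ (∀ i j, i ≠ j → e i ∩ e j = ∅) ∧
  (∀ l, 0 < μH[1] (e l) ∧ μH[1] (e l) < ⊤)

/- ## triangles and triangulations -/

def tri (p : Fin 3 → Pt) : Set Pt := convexHull ℝ (Set.range p)
def hT (p : Fin 3 → Pt) : ℝ := Real.sqrt (volume (tri p)).toReal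
def seg2 (p : Fin 3 → Pt) (k : Fin 3) : Set Pt := segment ℝ (p (k + 1)) (p (k + 2))
def edgeLen (p : Fin 3 → Pt) (k : Fin 3) : ℝ := (μH[1] (seg2 p k)).toReal

/-- shape regularity with parameter ρ -/
def ShapeReg (ρ : ℝ) (p : Fin 3 → Pt) : Prop :=
  AffineIndependent ℝ p ∧ ∃ x, Metric.ball x (ρ * Metric.diam (tri p)) ⊆ tri p

def rot2 (x : Pt) : Pt := (WithLp.equiv 2 (Fin 2 → ℝ)).symm ![x 1, -(x 0)]

open Classical in
/-- unit outward normal to the edge `seg2 p k` of the triangle `tri p` -/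
def outNormal (p : Fin 3 → Pt) (k : Fin 3) : Pt :=
  let d := rot2 (p (k + 2) - p (k + 1))
  if inner ℝ d (p k - p (k + 1)) ≤ (0:ℝ) then ‖d‖⁻¹ • d else -(‖d‖⁻¹ • d)

structure Triangulation2 (Ω : Set Pt) where
  n : ℕ
  vert : Fin n → Fin 3 → Pt
  indep : ∀ t, AffineIndependent ℝ (vert t)
  cover : Ω ⊆ ⋃ t, tri (vert t)
  subset : ∀ t, tri (vert t) ⊆ closure Ω
  disj : ∀ t s, t ≠ s → interior (tri (vert t)) ∩ interior (tri (vert s)) = ∅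

/-- the triangulation is ρ-shape-regular with mesh size at most h -/
def Triangulation2.Reg {Ω : Set Pt} (𝒯 : Triangulation2 Ω) (ρ h : ℝ) : Prop :=
  (∀ t, ShapeReg ρ (𝒯.vert t)) ∧ ∀ t, hT (𝒯.vert t) ≤ h

/-- each electrode is a union of boundary edges of the mesh -/
def ElecMesh {Ω : Set Pt} (𝒯 : Triangulation2 Ω) {L : ℕ} (e : Fin L → Set Pt) : Prop :=
  ∀ l, ∃ S : Finset (Fin 𝒯.n × Fin 3), e l = ⋃ p ∈ S, seg2 (𝒯.vert p.1) p.2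

/- ## projections -/

def IsAff (π : Pt → ℝ) : Prop := ∃ a : ℝ, ∃ b : Pt, ∀ x, π x = a + ∑ i, b i * x i

/-- π is the L²(T)-projection of φ onto P₁(T) -/
def IsL2ProjP1 (T : Set Pt) (φ π : Pt → ℝ) : Prop :=
  IsAff π ∧ ∀ ψ, IsAff ψ → ∫ x in T, (φ x - π x) * ψ x = 0

/-- the edgewise L² projection onto constants, i.e. the mean value on the edge -/
def edgeMean (p : Fin 3 → Pt) (k : Fin 3) (φ : Pt → ℝ) : ℝ :=
  (edgeLen p k)⁻¹ * ∫ x in seg2 p k, φ x ∂μH[1]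

/-- the mean value of a vector field on T = L² projection onto [P₀(T)]² -/
def cellMeanV (T : Set Pt) (g : Pt → Pt) : Pt := ((volume T).toReal)⁻¹ • ∫ x in T, g x

/-- classical gradient as a vector field -/
def gradF (φ : Pt → ℝ) (x : Pt) : Pt :=
  (WithLp.equiv 2 (Fin 2 → ℝ)).symm (fun i => pd φ i x)

/-- gradient within a set -/
def gradW (φ : Pt → ℝ) (S : Set Pt) (x : Pt) : Pt :=
  (WithLp.equiv 2 (Fin 2 → ℝ)).symm
    (fun i => fderivWithin ℝ φ S x (EuclideanSpace.single i 1))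

/-- squared H^k norm on S (for functions with classical derivatives) -/
def HkSqW (k : ℕ) (S : Set Pt) (φ : Pt → ℝ) : ℝ :=
  ∑ j ∈ Finset.range (k + 1), ∫ x in S, ‖iteratedFDerivWithin ℝ j φ S x‖ ^ 2

/- ## the lowest-order weak Galerkin space -/

structure WGfun {Ω : Set Pt} (𝒯 : Triangulation2 Ω) where
  v0 : Fin 𝒯.n → Pt → ℝ
  vb : Fin 𝒯.n → Fin 3 → ℝ
  aff : ∀ t, IsAff (v0 t)
  compat : ∀ t s k k', seg2 (𝒯.vert t) k = seg2 (𝒯.vert s) k' → vb t k = vb s k'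

/-- the weak gradient of a WG function on element t (a constant vector) -/
def wgrad {Ω : Set Pt} {𝒯 : Triangulation2 Ω} (v : WGfun 𝒯) (t : Fin 𝒯.n) : Pt :=
  ((volume (tri (𝒯.vert t))).toReal)⁻¹ •
    ∑ k, (v.vb t k * edgeLen (𝒯.vert t) k) • outNormal (𝒯.vert t) k

open Classical in
/-- the stabilized WG bilinear form a_s(σ_h, (u,U), (v,V)) -/
def asForm {Ω : Set Pt} {L : ℕ} (𝒯 : Triangulation2 Ω) (e : Fin L → Set Pt)
    (z : Fin L → ℝ) (σc : Fin 𝒯.n → ℝ)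
    (u : WGfun 𝒯) (U : Fin L → ℝ) (v : WGfun 𝒯) (V : Fin L → ℝ) : ℝ :=
  (∑ t, σc t * (inner ℝ (wgrad u t) (wgrad v t) : ℝ) * (volume (tri (𝒯.vert t))).toReal)
  + (∑ l, (z l)⁻¹ * ∑ t, ∑ k, if seg2 (𝒯.vert t) k ⊆ e l then
        (u.vb t k - U l) * (v.vb t k - V l) * edgeLen (𝒯.vert t) k else 0)
  + (∑ t, (hT (𝒯.vert t))⁻¹ * ∑ k,
        (edgeMean (𝒯.vert t) k (u.v0 t) - u.vb t k) *
        (edgeMean (𝒯.vert t) k (v.v0 t) - v.vb t k) * edgeLen (𝒯.vert t) k)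

/-- (u_h, U_h) solves the WG scheme -/
def IsWGSol {Ω : Set Pt} {L : ℕ} (𝒯 : Triangulation2 Ω) (e : Fin L → Set Pt)
    (z : Fin L → ℝ) (σc : Fin 𝒯.n → ℝ) (I : Fin L → ℝ)
    (u : WGfun 𝒯) (U : Fin L → ℝ) : Prop :=
  (∑ l, U l = 0) ∧ ∀ (v : WGfun 𝒯) (V : Fin L → ℝ), (∑ l, V l = 0) →
    asForm 𝒯 e z σc u U v V = ∑ l, I l * V l

open Classical in
/-- the piecewise constant function with values c on the elements -/
def pcFun {Ω : Set Pt} (𝒯 : Triangulation2 Ω) (c : Fin 𝒯.n → ℝ) (x : Pt) : ℝ :=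
  ∑ t, if x ∈ interior (tri (𝒯.vert t)) then c t else 0

/-- the discrete total variation N_h -/
def Nh {Ω : Set Pt} (𝒯 : Triangulation2 Ω) (c : Fin 𝒯.n → ℝ) : ℝ :=
  (1 / 2) * ∑ t, ∑ s, |c t - c s| *
    (μH[1] (frontier (tri (𝒯.vert t)) ∩ frontier (tri (𝒯.vert s)))).toReal

end

open Classical in
/-- the discrete norm ‖(v,V)‖²_{1,h} on the WG space -/
noncomputable def wgNorm1Sq {Ω : Set Pt} {L : ℕ} (𝒯 : Triangulation2 Ω)
    (e : Fin L → Set Pt) (v : WGfun 𝒯) (V : Fin L → ℝ) : ℝ :=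
  (∑ t, ((∫ x in tri (𝒯.vert t), ‖gradF (v.v0 t) x‖ ^ 2)
      + (hT (𝒯.vert t))⁻¹ *
          ∑ k, (edgeMean (𝒯.vert t) k (v.v0 t) - v.vb t k) ^ 2 * edgeLen (𝒯.vert t) k))
  + ∑ l, ∑ t, ∑ k, if seg2 (𝒯.vert t) k ⊆ e l then
      (v.vb t k - V l) ^ 2 * edgeLen (𝒯.vert t) k else 0

/-!
On a triangle `T` with affine `v₀`, the divergence theorem `∑ₖ (∫_{eₖ} v₀) nₖ = |T| ∇v₀` shows that
the weak gradient is `∇v₀ + |T|⁻¹ ∑ₖ |eₖ| (v_b - Q_b v₀)|_{eₖ} nₖ`. By Cauchy–Schwarz, shape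
regularity (`ρ |eₖ| ≤ h_T`) and `|T| = h_T²`, the correction term has squared `L²(T)` norm at most
`3 / (ρ h_T) ‖Q_b v₀ - v_b‖²_{∂T}`, so `‖∇_w v‖²_T` and `‖∇v₀‖²_T` bound each other up to the
stabiliser. The electrode terms of the two norms differ only by the weights `z_l⁻¹`.
-/

noncomputable section

lemma inner_pt (x y : Pt) : inner ℝ x y = x 0 * y 0 + x 1 * y 1 := by
  simp [PiLp.inner_apply, Fin.sum_univ_two, mul_comm]

lemma sum_mul_eq_inner (b x : Pt) : ∑ i, b i * x i = inner ℝ b x := by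
  simp [PiLp.inner_apply, mul_comm]

lemma norm_rot2 (x : Pt) : ‖rot2 x‖ = ‖x‖ := by
  simp only [EuclideanSpace.norm_eq, Fin.sum_univ_two, Real.norm_eq_abs, sq_abs]
  simp [rot2, add_comm]

lemma hasFDerivAt_affine (a : ℝ) (b x : Pt) :
    HasFDerivAt (fun y : Pt => a + ∑ i, b i * y i) (innerSL ℝ b) x := by
  simp_rw [sum_mul_eq_inner]
  exact (innerSL ℝ b).hasFDerivAt.const_add a

lemma gradF_affine (a : ℝ) (b x : Pt) : gradF (fun y : Pt => a + ∑ i, b i * y i) x = b := by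
  ext i
  simp only [gradF, pd, (hasFDerivAt_affine a b x).fderiv]
  simp [EuclideanSpace.inner_single_right]

lemma setIntegral_norm_sq_gradF_affine (T : Set Pt) {v0 : Pt → ℝ} (a : ℝ) (b : Pt)
    (hv0 : ∀ x, v0 x = a + ∑ i, b i * x i) :
    ∫ x in T, ‖gradF v0 x‖ ^ 2 = ‖b‖ ^ 2 * (volume T).toReal := by
  rw [funext hv0]
  simp_rw [gradF_affine]
  simp [mul_comm, Measure.real]

section Segment

variable {E : Type*} [NormedAddCommGroup E] [NormedSpace ℝ E] [MeasurableSpace E] [BorelSpace E]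

lemma restrict_hausdorffMeasure_segment (x y : E) :
    μH[1].restrict (segment ℝ x y) =
      ENNReal.ofReal (dist x y) •
        (volume.restrict (Set.Icc (0 : ℝ) 1)).map (AffineMap.lineMap x y) := by
  have hmeas : Measurable (AffineMap.lineMap x y : ℝ → E) := AffineMap.lineMap_continuous.measurable
  ext A hA
  rw [Measure.smul_apply, Measure.map_apply hmeas hA, Measure.restrict_apply hA,
    Measure.restrict_apply (hmeas hA), segment_eq_image_lineMap, Set.inter_comm,
    ← Set.image_inter_preimage, hausdorffMeasure_lineMap_image, hausdorffMeasure_real,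
    Set.inter_comm, dist_nndist, ENNReal.ofReal_coe_nnreal]
  rfl

lemma setIntegral_segment_hausdorffMeasure (x y : E) {f : E → ℝ} (hf : Continuous f) :
    ∫ p in segment ℝ x y, f p ∂μH[1] =
      dist x y * ∫ t in Set.Icc (0 : ℝ) 1, f (AffineMap.lineMap x y t) := by
  rw [restrict_hausdorffMeasure_segment, integral_smul_measure,
    integral_map AffineMap.lineMap_continuous.aemeasurable hf.aestronglyMeasurable,
    ENNReal.toReal_ofReal dist_nonneg, smul_eq_mul]

end Segment

lemma setIntegral_Icc_zero_one_affine (c d : ℝ) :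
    ∫ t in Set.Icc (0 : ℝ) 1, (c + t * d) = c + d / 2 := by
  rw [integral_Icc_eq_integral_Ioc, ← intervalIntegral.integral_of_le zero_le_one,
    intervalIntegral.integral_add (by simp) (by simp), intervalIntegral.integral_mul_const,
    integral_id, intervalIntegral.integral_const, smul_eq_mul]
  ring

lemma setIntegral_segment_affine (x y : Pt) (a : ℝ) (b : Pt) :
    ∫ p in segment ℝ x y, (a + ∑ i, b i * p i) ∂μH[1] =
      dist x y * (((a + ∑ i, b i * x i) + (a + ∑ i, b i * y i)) / 2) := by
  have hcont : Continuous fun p : Pt => a + ∑ i, b i * p i := by fun_prop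
  simp_rw [setIntegral_segment_hausdorffMeasure x y hcont, sum_mul_eq_inner,
    AffineMap.lineMap_apply, vsub_eq_sub, vadd_eq_add, inner_add_right, inner_smul_right,
    ← add_assoc, add_right_comm _ _ (inner ℝ b x), setIntegral_Icc_zero_one_affine, inner_sub_right]
  ring

def detp (p : Fin 3 → Pt) : ℝ :=
  (p 1 0 - p 0 0) * (p 2 1 - p 0 1) - (p 1 1 - p 0 1) * (p 2 0 - p 0 0)

def edgeMatrix (p : Fin 3 → Pt) : Pt →ₗ[ℝ] Pt :=
  (EuclideanSpace.proj (0 : Fin 2) : Pt →L[ℝ] ℝ).toLinearMap.smulRight (p 1 - p 0) +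
    (EuclideanSpace.proj (1 : Fin 2) : Pt →L[ℝ] ℝ).toLinearMap.smulRight (p 2 - p 0)

lemma edgeMatrix_apply (p : Fin 3 → Pt) (x : Pt) :
    edgeMatrix p x = x 0 • (p 1 - p 0) + x 1 • (p 2 - p 0) := rfl

lemma det_edgeMatrix (p : Fin 3 → Pt) : LinearMap.det (edgeMatrix p) = detp p := by
  rw [← LinearMap.det_toMatrix (EuclideanSpace.basisFun (Fin 2) ℝ).toBasis, Matrix.det_fin_two]
  simp [LinearMap.toMatrix_apply, edgeMatrix_apply, detp, mul_comm]

def refTriangle : Set Pt := {x | 0 ≤ x 0 ∧ 0 ≤ x 1 ∧ x 0 + x 1 ≤ 1}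

lemma convex_refTriangle : Convex ℝ refTriangle := by
  rintro x ⟨hx0, hx1, hx⟩ y ⟨hy0, hy1, hy⟩ s t hs ht hst
  simp only [refTriangle, Set.mem_ofPred_eq, PiLp.add_apply, PiLp.smul_apply, smul_eq_mul]
  refine ⟨by positivity, by positivity, by nlinarith⟩

lemma tri_eq_image_refTriangle (p : Fin 3 → Pt) :
    tri p = (p 0 + ·) '' (edgeMatrix p '' refTriangle) := by
  refine (convexHull_min ?_ ((convex_refTriangle.linear_image _).translate _)).antisymm ?_
  · rintro _ ⟨k, rfl⟩
    fin_cases k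
    · exact ⟨0, ⟨0, by simp [refTriangle], by simp⟩, by simp⟩
    · exact ⟨_, ⟨EuclideanSpace.single 0 1, by simp [refTriangle], rfl⟩, by simp [edgeMatrix_apply]⟩
    · exact ⟨_, ⟨EuclideanSpace.single 1 1, by simp [refTriangle], rfl⟩, by simp [edgeMatrix_apply]⟩
  · rintro _ ⟨_, ⟨x, ⟨hx0, hx1, hx⟩, rfl⟩, rfl⟩
    have hmem := (convex_convexHull ℝ (Set.range p)).sum_mem (t := Finset.univ)
      (w := ![1 - x 0 - x 1, x 0, x 1]) (z := p)
      (by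
        intro k _
        fin_cases k <;>
          simp only [Fin.isValue, Fin.zero_eta, Fin.mk_one, Fin.reduceFinMk, Matrix.cons_val_zero,
            Matrix.cons_val_one, Matrix.cons_val] <;> linarith)
      (by
        simp only [Fin.sum_univ_three, Matrix.cons_val_zero, Matrix.cons_val_one, Matrix.cons_val]
        ring)
      (fun k _ => subset_convexHull ℝ _ ⟨k, rfl⟩)
    convert hmem using 1
    simp only [edgeMatrix_apply, Fin.sum_univ_three, Matrix.cons_val_zero, Matrix.cons_val_one,
      Matrix.cons_val]
    module

lemma volume_refTriangle : volume refTriangle = ENNReal.ofReal (1 / 2) := by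
  set S : Set (ℝ × ℝ) := {q | 0 ≤ q.1 ∧ 0 ≤ q.2 ∧ q.1 + q.2 ≤ 1}
  have hS : MeasurableSet S :=
    (measurableSet_le measurable_const measurable_fst).inter
      ((measurableSet_le measurable_const measurable_snd).inter
        (measurableSet_le (measurable_fst.add measurable_snd) measurable_const))
  have hpre : refTriangle =
      (MeasurableEquiv.toLp 2 (Fin 2 → ℝ)).symm ⁻¹' (MeasurableEquiv.finTwoArrow ⁻¹' S) := by
    ext x; simp [refTriangle, S, MeasurableEquiv.finTwoArrow]
  have hslice (a : ℝ) : volume (Prod.mk a ⁻¹' S) =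
      (Set.Icc 0 1).indicator (fun a => ENNReal.ofReal (1 - a)) a := by
    by_cases ha : a ∈ Set.Icc (0 : ℝ) 1
    · have : Prod.mk a ⁻¹' S = Set.Icc 0 (1 - a) := by
        ext b; simp only [S, Set.mem_preimage, Set.mem_ofPred_eq, Set.mem_Icc, ha.1, true_and]
        constructor <;> intro h <;> constructor <;> linarith [h.1, h.2]
      rw [this, Real.volume_Icc, Set.indicator_of_mem ha, sub_zero]
    · have : Prod.mk a ⁻¹' S = ∅ := by
        rw [Set.mem_Icc, not_and_or, not_le, not_le] at ha
        refine Set.eq_empty_of_forall_notMem fun b ⟨h0, hb, hab⟩ => ?_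
        rcases ha with ha | ha <;> linarith
      rw [this, measure_empty, Set.indicator_of_notMem ha]
  rw [hpre, (EuclideanSpace.volume_preserving_symm_measurableEquiv_toLp (Fin 2)).measure_preimage
      (MeasurableEquiv.finTwoArrow.measurable hS).nullMeasurableSet,
    (volume_preserving_finTwoArrow ℝ).measure_preimage hS.nullMeasurableSet,
    Measure.volume_eq_prod, Measure.prod_apply hS]
  simp_rw [hslice]
  rw [lintegral_indicator measurableSet_Icc, ← ofReal_integral_eq_lintegral_ofReal]
  · have h := setIntegral_Icc_zero_one_affine 1 (-1)
    simp only [mul_neg_one, ← sub_eq_add_neg] at h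
    rw [h]
    norm_num
  · exact (continuous_const.sub continuous_id).integrableOn_Icc
  · exact (ae_restrict_iff' measurableSet_Icc).2 (ae_of_all _ fun a ha => by simp [ha.2])

lemma volume_tri (p : Fin 3 → Pt) : volume (tri p) = ENNReal.ofReal (|detp p| / 2) := by
  rw [tri_eq_image_refTriangle, Set.image_add_left, measure_preimage_add,
    Measure.addHaar_image_linearMap, det_edgeMatrix, volume_refTriangle,
    ← ENNReal.ofReal_mul (abs_nonneg _), mul_one_div]

lemma detp_ne_zero {p : Fin 3 → Pt} (hp : AffineIndependent ℝ p) : detp p ≠ 0 := by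
  intro h
  obtain ⟨x, hx, hx0⟩ := Submodule.ne_bot_iff _ |>.1 (LinearMap.det_eq_zero_iff_ker_ne_bot.1
    ((det_edgeMatrix p).trans h))
  rw [LinearMap.mem_ker, edgeMatrix_apply] at hx
  have hw := (affineIndependent_iff_of_fintype ℝ p).1 hp ![-(x 0 + x 1), x 0, x 1]
    (by simp [Fin.sum_univ_three]) (by
      rw [Finset.weightedVSub_eq_linear_combination _ (by simp [Fin.sum_univ_three]), ← hx]
      simp only [Fin.sum_univ_three, Matrix.cons_val_zero, Matrix.cons_val_one, Matrix.cons_val]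
      module)
  refine hx0 (PiLp.ext fun i => ?_)
  fin_cases i
  · simpa using hw 1
  · simpa using hw 2

section Triangle

variable {p : Fin 3 → Pt}

lemma volume_tri_toReal (p : Fin 3 → Pt) : (volume (tri p)).toReal = |detp p| / 2 := by
  rw [volume_tri, ENNReal.toReal_ofReal (by positivity)]

lemma hT_sq (p : Fin 3 → Pt) : hT p ^ 2 = (volume (tri p)).toReal :=
  Real.sq_sqrt ENNReal.toReal_nonneg

lemma volume_tri_toReal_pos (hp : AffineIndependent ℝ p) : 0 < (volume (tri p)).toReal := by
  rw [volume_tri_toReal]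
  have := detp_ne_zero hp
  positivity

lemma hT_pos (hp : AffineIndependent ℝ p) : 0 < hT p :=
  Real.sqrt_pos.2 (volume_tri_toReal_pos hp)

lemma edgeLen_eq_dist (p : Fin 3 → Pt) (k : Fin 3) :
    edgeLen p k = dist (p (k + 1)) (p (k + 2)) := by
  rw [edgeLen, seg2, hausdorffMeasure_segment, edist_dist, ENNReal.toReal_ofReal dist_nonneg]

lemma edgeLen_pos (hp : AffineIndependent ℝ p) (k : Fin 3) : 0 < edgeLen p k := by
  rw [edgeLen_eq_dist, dist_pos]
  exact hp.injective.ne (by fin_cases k <;> decide)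

lemma edgeLen_le_diam (p : Fin 3 → Pt) (k : Fin 3) : edgeLen p k ≤ Metric.diam (tri p) :=
  edgeLen_eq_dist p k ▸ Metric.dist_le_diam_of_mem
    ((Set.finite_range p).isCompact_convexHull (𝕜 := ℝ)).isBounded
    (subset_convexHull ℝ _ ⟨_, rfl⟩) (subset_convexHull ℝ _ ⟨_, rfl⟩)

lemma ShapeReg.mul_diam_le_hT {ρ : ℝ} (hreg : ShapeReg ρ p) :
    ρ * Metric.diam (tri p) ≤ hT p := by
  obtain ⟨hp, x, hball⟩ := hreg
  set r := ρ * Metric.diam (tri p)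
  rcases le_or_gt r 0 with hr | hr
  · exact hr.trans (Real.sqrt_nonneg _)
  have hvol := measure_mono (μ := volume) hball
  rw [EuclideanSpace.volume_ball_fin_two, ← ENNReal.ofReal_pow hr.le,
    ← ENNReal.ofReal_mul (by positivity), volume_tri,
    ENNReal.ofReal_le_ofReal_iff (by positivity), ← volume_tri_toReal, ← hT_sq] at hvol
  nlinarith [Real.pi_gt_three, hT_pos hp]

lemma ShapeReg.mul_edgeLen_le_hT {ρ : ℝ} (hρ : 0 < ρ) (hreg : ShapeReg ρ p) (k : Fin 3) :
    ρ * edgeLen p k ≤ hT p :=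
  (mul_le_mul_of_nonneg_left (edgeLen_le_diam p k) hρ.le).trans hreg.mul_diam_le_hT

end Triangle

section Normal

variable {p : Fin 3 → Pt}

lemma inner_rot2_edge (p : Fin 3 → Pt) (k : Fin 3) :
    inner ℝ (rot2 (p (k + 2) - p (k + 1))) (p k - p (k + 1)) = -detp p := by
  fin_cases k <;>
  · simp only [inner_pt, rot2, detp, WithLp.equiv_symm_apply, PiLp.sub_apply, Matrix.cons_val_zero,
      Matrix.cons_val_one, Matrix.cons_val_fin_one, Fin.isValue, Fin.reduceAdd, Fin.zero_eta,
      Fin.mk_one, Fin.reduceFinMk, zero_add]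
    ring

lemma edgeLen_smul_outNormal (hp : AffineIndependent ℝ p) (k : Fin 3) :
    edgeLen p k • outNormal p k =
      (if 0 ≤ detp p then (1 : ℝ) else -1) • rot2 (p (k + 2) - p (k + 1)) := by
  have hd : ‖rot2 (p (k + 2) - p (k + 1))‖ = edgeLen p k := by
    rw [norm_rot2, edgeLen_eq_dist, dist_eq_norm']
  have hne := (edgeLen_pos hp k).ne'
  simp only [outNormal, inner_rot2_edge, neg_nonpos, ← hd] at hne ⊢
  split_ifs <;> simp [smul_smul, mul_inv_cancel₀ hne]

lemma norm_outNormal (hp : AffineIndependent ℝ p) (k : Fin 3) : ‖outNormal p k‖ = 1 := by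
  have h := congrArg norm (edgeLen_smul_outNormal hp k)
  rw [norm_smul, norm_smul, norm_rot2, ← dist_eq_norm', ← edgeLen_eq_dist,
    Real.norm_of_nonneg (edgeLen_pos hp k).le] at h
  split_ifs at h <;> simpa [(edgeLen_pos hp k).ne'] using h

lemma sum_edge_average_smul_rot2 (p : Fin 3 → Pt) (a : ℝ) (b : Pt) :
    ∑ k : Fin 3, (((a + ∑ i, b i * p (k + 1) i) + (a + ∑ i, b i * p (k + 2) i)) / 2) •
        rot2 (p (k + 2) - p (k + 1)) = (detp p / 2) • b := by
  ext i
  fin_cases i <;>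
  · simp only [Fin.sum_univ_three, Fin.sum_univ_two, rot2, detp, WithLp.equiv_symm_apply,
      PiLp.sub_apply, PiLp.add_apply, PiLp.smul_apply, smul_eq_mul, Matrix.cons_val_zero,
      Matrix.cons_val_one, Matrix.cons_val_fin_one, Fin.isValue, Fin.reduceAdd, Fin.zero_eta,
      Fin.mk_one, zero_add]
    ring

lemma sum_setIntegral_edge_smul_outNormal (hp : AffineIndependent ℝ p) (a : ℝ) (b : Pt) :
    ∑ k, (∫ x in seg2 p k, (a + ∑ i, b i * x i) ∂μH[1]) • outNormal p k =
      (volume (tri p)).toReal • b := by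
  have hterm (k : Fin 3) : (∫ x in seg2 p k, (a + ∑ i, b i * x i) ∂μH[1]) • outNormal p k =
      (if 0 ≤ detp p then (1 : ℝ) else -1) •
        ((((a + ∑ i, b i * p (k + 1) i) + (a + ∑ i, b i * p (k + 2) i)) / 2) •
          rot2 (p (k + 2) - p (k + 1))) := by
    rw [seg2, setIntegral_segment_affine, ← edgeLen_eq_dist, mul_comm, mul_smul,
      edgeLen_smul_outNormal hp, smul_comm]
  rw [Finset.sum_congr rfl fun k _ => hterm k, ← Finset.smul_sum, sum_edge_average_smul_rot2,
    smul_smul, volume_tri_toReal]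
  congr 1
  split_ifs with h
  · rw [abs_of_nonneg h]; ring
  · rw [abs_of_neg (not_le.1 h)]; ring

end Normal

lemma norm_sq_le_two_mul_add_norm_sub_sq {E : Type*} [SeminormedAddCommGroup E] (x y : E) :
    ‖x‖ ^ 2 ≤ 2 * (‖y‖ ^ 2 + ‖x - y‖ ^ 2) :=
  (pow_le_pow_left₀ (norm_nonneg x) (norm_le_insert' x y) 2).trans add_sq_le

lemma sum_mul_le_sum_mul_sum {ι : Type*} (s : Finset ι) {w f : ι → ℝ}
    (hw : ∀ i ∈ s, 0 ≤ w i) (hf : ∀ i ∈ s, 0 ≤ f i) :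
    ∑ i ∈ s, w i * f i ≤ (∑ i ∈ s, w i) * ∑ i ∈ s, f i := by
  rw [Finset.mul_sum]
  exact Finset.sum_le_sum fun i hi =>
    mul_le_mul_of_nonneg_right (Finset.single_le_sum hw hi) (hf i hi)

def localWeakGrad (p : Fin 3 → Pt) (vb : Fin 3 → ℝ) : Pt :=
  ((volume (tri p)).toReal)⁻¹ • ∑ k, (vb k * edgeLen p k) • outNormal p k

def edgeDefectSq (p : Fin 3 → Pt) (v0 : Pt → ℝ) (vb : Fin 3 → ℝ) : ℝ :=
  ∑ k, (edgeMean p k v0 - vb k) ^ 2 * edgeLen p k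

section LocalEstimates

variable {p : Fin 3 → Pt} {v0 : Pt → ℝ} {a : ℝ} {b : Pt}

lemma edgeDefectSq_nonneg (p : Fin 3 → Pt) (v0 : Pt → ℝ) (vb : Fin 3 → ℝ) :
    0 ≤ edgeDefectSq p v0 vb :=
  Finset.sum_nonneg fun _ _ => mul_nonneg (sq_nonneg _) ENNReal.toReal_nonneg

lemma localWeakGrad_sub_eq (hp : AffineIndependent ℝ p) (hv0 : ∀ x, v0 x = a + ∑ i, b i * x i)
    (vb : Fin 3 → ℝ) :
    localWeakGrad p vb - b = ((volume (tri p)).toReal)⁻¹ •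
      ∑ k, ((vb k - edgeMean p k v0) * edgeLen p k) • outNormal p k := by
  have hmean (k : Fin 3) : edgeMean p k v0 * edgeLen p k = ∫ x in seg2 p k, v0 x ∂μH[1] := by
    rw [edgeMean, mul_right_comm, inv_mul_cancel₀ (edgeLen_pos hp k).ne', one_mul]
  simp_rw [sub_mul, sub_smul, Finset.sum_sub_distrib, hmean, funext hv0,
    sum_setIntegral_edge_smul_outNormal hp, smul_sub, localWeakGrad,
    inv_smul_smul₀ (volume_tri_toReal_pos hp).ne']

lemma norm_sum_edge_smul_outNormal_sq_le {ρ : ℝ} (hρ : 0 < ρ) (hreg : ShapeReg ρ p)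
    (δ : Fin 3 → ℝ) :
    ρ * ‖∑ k, (δ k * edgeLen p k) • outNormal p k‖ ^ 2 ≤
      3 * hT p * ∑ k, δ k ^ 2 * edgeLen p k := by
  have hL (k : Fin 3) := (edgeLen_pos hreg.1 k).le
  have hnorm : ‖∑ k, (δ k * edgeLen p k) • outNormal p k‖ ≤ ∑ k, |δ k| * edgeLen p k :=
    (norm_sum_le _ _).trans_eq <| Finset.sum_congr rfl fun k _ => by
      rw [norm_smul, norm_outNormal hreg.1, mul_one, Real.norm_eq_abs, abs_mul,
        abs_of_nonneg (hL k)]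
  calc ρ * ‖∑ k, (δ k * edgeLen p k) • outNormal p k‖ ^ 2
      ≤ ρ * (3 * ∑ k, (|δ k| * edgeLen p k) ^ 2) := by
        gcongr
        exact (pow_le_pow_left₀ (norm_nonneg _) hnorm 2).trans
          (sq_sum_le_card_mul_sum_sq.trans_eq (by simp))
    _ = 3 * ∑ k, δ k ^ 2 * edgeLen p k * (ρ * edgeLen p k) := by
        rw [Finset.mul_sum, Finset.mul_sum, Finset.mul_sum]
        exact Finset.sum_congr rfl fun k _ => by rw [mul_pow, sq_abs]; ring
    _ ≤ 3 * ∑ k, δ k ^ 2 * edgeLen p k * hT p := by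
        gcongr with k
        · exact mul_nonneg (sq_nonneg _) (hL k)
        · exact hreg.mul_edgeLen_le_hT hρ k
    _ = 3 * hT p * ∑ k, δ k ^ 2 * edgeLen p k := by
        rw [← Finset.sum_mul]; ring

lemma norm_sq_localWeakGrad_sub_mul_le {ρ : ℝ} (hρ : 0 < ρ) (hreg : ShapeReg ρ p)
    (hv0 : ∀ x, v0 x = a + ∑ i, b i * x i) (vb : Fin 3 → ℝ) :
    ‖localWeakGrad p vb - b‖ ^ 2 * (volume (tri p)).toReal ≤
      3 / ρ * (hT p)⁻¹ * edgeDefectSq p v0 vb := by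
  have hS : edgeDefectSq p v0 vb = ∑ k, (vb k - edgeMean p k v0) ^ 2 * edgeLen p k := by
    simp_rw [edgeDefectSq, ← neg_sub (vb _), neg_sq]
  have hr := norm_sum_edge_smul_outNormal_sq_le hρ hreg fun k => vb k - edgeMean p k v0
  have hA := hT_pos hreg.1
  rw [← hS] at hr
  rw [localWeakGrad_sub_eq hreg.1 hv0, norm_smul, mul_pow, norm_inv,
    Real.norm_of_nonneg ENNReal.toReal_nonneg, ← hT_sq]
  field_simp
  nlinarith

lemma norm_sq_localWeakGrad_mul_le {ρ : ℝ} (hρ : 0 < ρ) (hreg : ShapeReg ρ p)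
    (hv0 : ∀ x, v0 x = a + ∑ i, b i * x i) (vb : Fin 3 → ℝ) :
    ‖localWeakGrad p vb‖ ^ 2 * (volume (tri p)).toReal ≤
      2 * ((∫ x in tri p, ‖gradF v0 x‖ ^ 2) + 3 / ρ * (hT p)⁻¹ * edgeDefectSq p v0 vb) := by
  have h := norm_sq_localWeakGrad_sub_mul_le hρ hreg hv0 vb
  have hA := (volume_tri_toReal_pos hreg.1).le
  rw [setIntegral_norm_sq_gradF_affine _ a b hv0]
  linarith [mul_le_mul_of_nonneg_right
    (norm_sq_le_two_mul_add_norm_sub_sq (localWeakGrad p vb) b) hA]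

lemma setIntegral_norm_sq_gradF_le {ρ : ℝ} (hρ : 0 < ρ) (hreg : ShapeReg ρ p)
    (hv0 : ∀ x, v0 x = a + ∑ i, b i * x i) (vb : Fin 3 → ℝ) :
    ∫ x in tri p, ‖gradF v0 x‖ ^ 2 ≤
      2 * (‖localWeakGrad p vb‖ ^ 2 * (volume (tri p)).toReal +
        3 / ρ * (hT p)⁻¹ * edgeDefectSq p v0 vb) := by
  have h := norm_sq_localWeakGrad_sub_mul_le hρ hreg hv0 vb
  have hA := (volume_tri_toReal_pos hreg.1).le
  rw [norm_sub_rev] at h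
  rw [setIntegral_norm_sq_gradF_affine _ a b hv0]
  linarith [mul_le_mul_of_nonneg_right
    (norm_sq_le_two_mul_add_norm_sub_sq b (localWeakGrad p vb)) hA]

end LocalEstimates

open Classical in
def electrodeSq {Ω : Set Pt} {L : ℕ} {𝒯 : Triangulation2 Ω} (e : Fin L → Set Pt)
    (v : WGfun 𝒯) (V : Fin L → ℝ) (l : Fin L) : ℝ :=
  ∑ t, ∑ k, if seg2 (𝒯.vert t) k ⊆ e l then (v.vb t k - V l) ^ 2 * edgeLen (𝒯.vert t) k else 0

section Global

variable {Ω : Set Pt} {L : ℕ} {𝒯 : Triangulation2 Ω} (e : Fin L → Set Pt) (v : WGfun 𝒯)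
  (V : Fin L → ℝ)

lemma wgrad_eq_localWeakGrad (t : Fin 𝒯.n) : wgrad v t = localWeakGrad (𝒯.vert t) (v.vb t) :=
  rfl

lemma electrodeSq_nonneg (l : Fin L) : 0 ≤ electrodeSq e v V l :=
  Finset.sum_nonneg fun _ _ => Finset.sum_nonneg fun _ _ => by
    split_ifs
    exacts [mul_nonneg (sq_nonneg _) ENNReal.toReal_nonneg, le_rfl]

lemma asForm_one_self (z : Fin L → ℝ) :
    asForm 𝒯 e z (fun _ => 1) v V v V =
      ∑ t, ‖wgrad v t‖ ^ 2 * (volume (tri (𝒯.vert t))).toReal +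
        ∑ l, (z l)⁻¹ * electrodeSq e v V l +
        ∑ t, (hT (𝒯.vert t))⁻¹ * edgeDefectSq (𝒯.vert t) (v.v0 t) (v.vb t) := by
  simp only [asForm, electrodeSq, edgeDefectSq, one_mul, real_inner_self_eq_norm_sq, ← sq]

lemma wgNorm1Sq_eq :
    wgNorm1Sq 𝒯 e v V =
      ∑ t, (∫ x in tri (𝒯.vert t), ‖gradF (v.v0 t) x‖ ^ 2) +
        ∑ t, (hT (𝒯.vert t))⁻¹ * edgeDefectSq (𝒯.vert t) (v.v0 t) (v.vb t) +
        ∑ l, electrodeSq e v V l := by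
  rw [wgNorm1Sq, Finset.sum_add_distrib]
  rfl

lemma sum_inv_mul_electrodeSq_le {z : Fin L → ℝ} (hz : ∀ l, 0 < z l) :
    ∑ l, (z l)⁻¹ * electrodeSq e v V l ≤ (∑ l, (z l)⁻¹) * ∑ l, electrodeSq e v V l :=
  sum_mul_le_sum_mul_sum _ (fun l _ => (inv_pos.2 (hz l)).le)
    (fun l _ => electrodeSq_nonneg e v V l)

lemma sum_electrodeSq_le {z : Fin L → ℝ} (hz : ∀ l, 0 < z l) :
    ∑ l, electrodeSq e v V l ≤ (∑ l, z l) * ∑ l, (z l)⁻¹ * electrodeSq e v V l := by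
  calc ∑ l, electrodeSq e v V l = ∑ l, z l * ((z l)⁻¹ * electrodeSq e v V l) :=
        Finset.sum_congr rfl fun l _ => (mul_inv_cancel_left₀ (hz l).ne' _).symm
    _ ≤ _ := sum_mul_le_sum_mul_sum _ (fun l _ => (hz l).le)
        (fun l _ => mul_nonneg (inv_pos.2 (hz l)).le (electrodeSq_nonneg e v V l))

lemma sum_norm_sq_wgrad_mul_le {ρ : ℝ} (hρ : 0 < ρ) (hreg : ∀ t, ShapeReg ρ (𝒯.vert t)) :
    ∑ t, ‖wgrad v t‖ ^ 2 * (volume (tri (𝒯.vert t))).toReal ≤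
      2 * (∑ t, (∫ x in tri (𝒯.vert t), ‖gradF (v.v0 t) x‖ ^ 2) +
        3 / ρ * ∑ t, (hT (𝒯.vert t))⁻¹ * edgeDefectSq (𝒯.vert t) (v.v0 t) (v.vb t)) := by
  simp only [Finset.mul_sum, ← Finset.sum_add_distrib, ← mul_assoc]
  refine Finset.sum_le_sum fun t _ => ?_
  obtain ⟨a, b, hab⟩ := v.aff t
  rw [wgrad_eq_localWeakGrad]
  exact (norm_sq_localWeakGrad_mul_le hρ (hreg t) hab (v.vb t)).trans_eq (by ring)

lemma sum_setIntegral_norm_sq_gradF_le {ρ : ℝ} (hρ : 0 < ρ)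
    (hreg : ∀ t, ShapeReg ρ (𝒯.vert t)) :
    ∑ t, (∫ x in tri (𝒯.vert t), ‖gradF (v.v0 t) x‖ ^ 2) ≤
      2 * (∑ t, ‖wgrad v t‖ ^ 2 * (volume (tri (𝒯.vert t))).toReal +
        3 / ρ * ∑ t, (hT (𝒯.vert t))⁻¹ * edgeDefectSq (𝒯.vert t) (v.v0 t) (v.vb t)) := by
  simp only [Finset.mul_sum, ← Finset.sum_add_distrib, ← mul_assoc]
  refine Finset.sum_le_sum fun t _ => ?_
  obtain ⟨a, b, hab⟩ := v.aff t
  rw [wgrad_eq_localWeakGrad]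
  exact (setIntegral_norm_sq_gradF_le hρ (hreg t) hab (v.vb t)).trans_eq (by ring)

end Global

end

theorem wg_norm_equivalence_general (Ω : Set Pt) (L : ℕ)
    (e : Fin L → Set Pt)
    (z : Fin L → ℝ) (hz : ∀ l, 0 < z l) (ρ : ℝ) (hρ : 0 < ρ) :
    ∃ C₁ C₂ : ℝ, 0 < C₁ ∧ 0 < C₂ ∧
      ∀ h : ℝ, 0 < h → ∀ 𝒯 : Triangulation2 Ω, 𝒯.Reg ρ h → ElecMesh 𝒯 e →
        ∀ (v : WGfun 𝒯) (V : Fin L → ℝ), (∑ l, V l = 0) →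
          C₁ * wgNorm1Sq 𝒯 e v V ≤ asForm 𝒯 e z (fun _ => 1) v V v V ∧
          asForm 𝒯 e z (fun _ => 1) v V v V ≤ C₂ * wgNorm1Sq 𝒯 e v V := by
  have hz' : 0 ≤ ∑ l, z l := Finset.sum_nonneg fun l _ => (hz l).le
  have hz_inv : 0 ≤ ∑ l, (z l)⁻¹ := Finset.sum_nonneg fun l _ => (inv_pos.2 (hz l)).le
  have hK : 0 < 3 / ρ := by positivity
  refine ⟨(3 + 2 * (3 / ρ) + ∑ l, z l)⁻¹, 3 + 2 * (3 / ρ) + ∑ l, (z l)⁻¹, by positivity,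
    by positivity, fun _ _ 𝒯 hreg _ v V _ => ?_⟩
  have hW := sum_norm_sq_wgrad_mul_le v hρ hreg.1
  have hG := sum_setIntegral_norm_sq_gradF_le v hρ hreg.1
  have hZ := sum_inv_mul_electrodeSq_le e v V hz
  have hE := sum_electrodeSq_le e v V hz
  have hW0 : 0 ≤ ∑ t, ‖wgrad v t‖ ^ 2 * (volume (tri (𝒯.vert t))).toReal := by positivity
  have hG0 : 0 ≤ ∑ t, ∫ x in tri (𝒯.vert t), ‖gradF (v.v0 t) x‖ ^ 2 := by positivity
  have hS0 : 0 ≤ ∑ t, (hT (𝒯.vert t))⁻¹ * edgeDefectSq (𝒯.vert t) (v.v0 t) (v.vb t) :=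
    Finset.sum_nonneg fun t _ =>
      mul_nonneg (inv_nonneg.2 (Real.sqrt_nonneg _)) (edgeDefectSq_nonneg _ _ _)
  have hE0 : 0 ≤ ∑ l, electrodeSq e v V l :=
    Finset.sum_nonneg fun l _ => electrodeSq_nonneg e v V l
  have hZ0 : 0 ≤ ∑ l, (z l)⁻¹ * electrodeSq e v V l :=
    Finset.sum_nonneg fun l _ => mul_nonneg (inv_pos.2 (hz l)).le (electrodeSq_nonneg e v V l)
  rw [asForm_one_self, wgNorm1Sq_eq]
  constructor
  · rw [inv_mul_le_iff₀ (by positivity)]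
    nlinarith
  · nlinarith

/-- equivalence of the discrete norms `‖·‖_{1,h}` and
`|||·|||_h = a_s(1,·,·)^{1/2}` on the WG space, with constants independent of h. -/
theorem wg_norm_equivalence (Ω : Set Pt) (L : ℕ) (hL : 0 < L)
    (e : Fin L → Set Pt) (hset : ElectrodeSetup Ω e)
    (z : Fin L → ℝ) (hz : ∀ l, 0 < z l) (ρ : ℝ) (hρ : 0 < ρ) :
    ∃ C₁ C₂ : ℝ, 0 < C₁ ∧ 0 < C₂ ∧
      ∀ h : ℝ, 0 < h → ∀ 𝒯 : Triangulation2 Ω, 𝒯.Reg ρ h → ElecMesh 𝒯 e →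
        ∀ (v : WGfun 𝒯) (V : Fin L → ℝ), (∑ l, V l = 0) →
          C₁ * wgNorm1Sq 𝒯 e v V ≤ asForm 𝒯 e z (fun _ => 1) v V v V ∧
          asForm 𝒯 e z (fun _ => 1) v V v V ≤ C₂ * wgNorm1Sq 𝒯 e v V :=
  wg_norm_equivalence_general Ω L e z hz ρ hρ
end

section
/- Lower semicontinuity of the squared data-misfit along weakly convergent CEM solutions: if σ_n → σ* in L^1(Ω) with σ_n, σ* ∈ 𝒜 and (u_n,U_n) = F(σ_n) are the corresponding CEM solutions with ‖u_n‖_{H^1} bounded, u_n ⇀ u* weakly in H^1(Ω) and U_n → U* in ℝ^L, then (u*,U*) = F(σ*), i.e. the weak limit solves the CEM with conductivity σ*. -/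
open MeasureTheory Filter Topology
open scoped ENNReal NNReal

/-! Test the equation for `σₙ` against a fixed `(v, V)` and pass to the limit term by term.
Split `σₙ ∇uₙ·∇v = ∇uₙ·(σ* ∇v) + (σₙ - σ*) ∇uₙ·∇v`: the first part converges because
`σ* ∇v ∈ L²` and `∇uₙ ⇀ ∇u*`; the second is at most `‖(σₙ - σ*) ∇v‖_{L²} ‖∇uₙ‖_{L²}` by
Cauchy–Schwarz, where `‖∇uₙ‖_{L²}` is bounded and `‖(σₙ - σ*) ∇v‖_{L²} → 0` by dominated
convergence, since `σₙ → σ*` in measure and `|σₙ - σ*|` is uniformly bounded. The electrode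
terms are affine in `(uₙ, Uₙ)` and converge by weak convergence of the traces. -/

open MeasureTheory Filter Topology

section L2Estimates

variable {α : Type*} [MeasurableSpace α] {μ : Measure α}

theorem abs_integral_le_sqrt_mul_sqrt {F a b : α → ℝ} (ha : MemLp a 2 μ) (hb : MemLp b 2 μ)
    (hF : ∀ᵐ x ∂μ, |F x| ≤ |a x| * |b x|) :
    |∫ x, F x ∂μ| ≤ √(∫ x, a x ^ 2 ∂μ) * √(∫ x, b x ^ 2 ∂μ) := by
  have h2 : ENNReal.ofReal 2 = 2 := by norm_num
  calc |∫ x, F x ∂μ| ≤ ∫ x, |a x| * |b x| ∂μ :=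
        norm_integral_le_of_norm_le (f := F) (ha.abs.integrable_mul hb.abs) hF
    _ ≤ (∫ x, |a x| ^ (2 : ℝ) ∂μ) ^ (1 / 2 : ℝ) * (∫ x, |b x| ^ (2 : ℝ) ∂μ) ^ (1 / 2 : ℝ) :=
        integral_mul_le_Lp_mul_Lq_of_nonneg .two_two (.of_forall fun _ => abs_nonneg _)
          (.of_forall fun _ => abs_nonneg _) (h2 ▸ ha.abs) (h2 ▸ hb.abs)
    _ = √(∫ x, a x ^ 2 ∂μ) * √(∫ x, b x ^ 2 ∂μ) := by
        simp only [Real.rpow_two, sq_abs, Real.sqrt_eq_rpow]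

theorem tendsto_integral_of_abs_le_mul {ι : Type*} {l : Filter ι} {F a b : ι → α → ℝ} {M : ℝ}
    (ha : ∀ n, MemLp (a n) 2 μ) (hb : ∀ n, MemLp (b n) 2 μ)
    (hF : ∀ n, ∀ᵐ x ∂μ, |F n x| ≤ |a n x| * |b n x|)
    (ha₀ : Tendsto (fun n => ∫ x, a n x ^ 2 ∂μ) l (𝓝 0)) (hbM : ∀ n, ∫ x, b n x ^ 2 ∂μ ≤ M) :
    Tendsto (fun n => ∫ x, F n x ∂μ) l (𝓝 0) := by
  refine squeeze_zero_norm (fun n => ?_) (by simpa using ha₀.sqrt.mul_const √M)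
  exact (abs_integral_le_sqrt_mul_sqrt (ha n) (hb n) (hF n)).trans
    (mul_le_mul_of_nonneg_left (Real.sqrt_le_sqrt (hbM n)) (Real.sqrt_nonneg _))

theorem tendstoInMeasure_of_tendsto_integral_abs_sub {ι : Type*} {l : Filter ι}
    {f : ι → α → ℝ} {f₀ : α → ℝ} (hf : ∀ n, Integrable (f n) μ) (hf₀ : Integrable f₀ μ)
    (h : Tendsto (fun n => ∫ x, |f n x - f₀ x| ∂μ) l (𝓝 0)) : TendstoInMeasure μ f l f₀ := by
  refine tendstoInMeasure_of_tendsto_eLpNorm one_ne_zero (fun n => (hf n).1) hf₀.1 ?_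
  have hnorm : ∀ n, eLpNorm (f n - f₀) 1 μ = ENNReal.ofReal (∫ x, |f n x - f₀ x| ∂μ) := fun n => by
    rw [eLpNorm_one_eq_lintegral_enorm, ← ofReal_integral_norm_eq_lintegral_enorm
      ((hf n).sub hf₀)]
    rfl
  simpa only [hnorm, ENNReal.ofReal_zero, Function.comp_def] using
    (ENNReal.continuous_ofReal.tendsto 0).comp h

theorem tendsto_integral_sq_mul_of_tendstoInMeasure {f : ℕ → α → ℝ} {f₀ g : α → ℝ} {C : ℝ}
    (hf : TendstoInMeasure μ f atTop f₀) (hfm : ∀ n, AEStronglyMeasurable (f n) μ)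
    (hf₀m : AEStronglyMeasurable f₀ μ) (hC : ∀ n, ∀ᵐ x ∂μ, |f n x - f₀ x| ≤ C)
    (hg : MemLp g 2 μ) :
    Tendsto (fun n => ∫ x, ((f n x - f₀ x) * g x) ^ 2 ∂μ) atTop (𝓝 0) := by
  refine tendsto_of_subseq_tendsto fun ns hns => ?_
  obtain ⟨ms, -, hae⟩ := (hf.comp hns).exists_seq_tendsto_ae
  refine ⟨ms, ?_⟩
  simpa only [integral_zero] using tendsto_integral_of_dominated_convergence
    (F := fun k x => ((f (ns (ms k)) x - f₀ x) * g x) ^ 2) (f := fun _ => 0)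
    (fun x => C ^ 2 * g x ^ 2)
    (fun k => (((hfm _).sub hf₀m).mul hg.1).pow 2) (hg.integrable_sq.const_mul _)
    (fun k => by
      filter_upwards [hC (ns (ms k))] with x hx
      rw [Real.norm_of_nonneg (sq_nonneg _), mul_pow, ← sq_abs (f _ x - f₀ x)]
      gcongr)
    (by
      filter_upwards [hae] with x hx
      simpa using ((hx.sub_const (f₀ x)).mul_const (g x)).pow 2)

end L2Estimates

section EuclideanDot

variable {ι : Type*} [Fintype ι]

theorem abs_sum_mul_le_norm_mul_norm (a b : EuclideanSpace ℝ ι) :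
    |∑ i, a i * b i| ≤ ‖a‖ * ‖b‖ := by
  have h : ∑ i, a i * b i = inner ℝ a b := by simp [PiLp.inner_apply, mul_comm]
  exact h ▸ abs_real_inner_le_norm a b

variable {α : Type*} [MeasurableSpace α] {μ : Measure α}

theorem integrable_sum_mul_of_memLp {f g : α → EuclideanSpace ℝ ι} (hf : MemLp f 2 μ)
    (hg : MemLp g 2 μ) : Integrable (fun x => ∑ i, f x i * g x i) μ :=
  integrable_finsetSum _ fun i _ =>
    ((EuclideanSpace.proj i : EuclideanSpace ℝ ι →L[ℝ] ℝ).comp_memLp' hf).integrable_mul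
      ((EuclideanSpace.proj i : EuclideanSpace ℝ ι →L[ℝ] ℝ).comp_memLp' hg)

theorem tendsto_integral_mul_sum_mul_of_tendstoInMeasure {σ : ℕ → α → ℝ} {σ₀ : α → ℝ}
    {w : ℕ → α → EuclideanSpace ℝ ι} {w₀ g : α → EuclideanSpace ℝ ι} {C M : ℝ}
    (hσ : TendstoInMeasure μ σ atTop σ₀) (hσm : ∀ n, AEStronglyMeasurable (σ n) μ)
    (hσ₀m : AEStronglyMeasurable σ₀ μ) (hC : ∀ n, ∀ᵐ x ∂μ, |σ n x| ≤ C)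
    (hC₀ : ∀ᵐ x ∂μ, |σ₀ x| ≤ C) (hw : ∀ n, MemLp (w n) 2 μ)
    (hM : ∀ n, ∫ x, ‖w n x‖ ^ 2 ∂μ ≤ M)
    (hweak : ∀ h : α → EuclideanSpace ℝ ι, MemLp h 2 μ →
      Tendsto (fun n => ∫ x, ∑ i, w n x i * h x i ∂μ) atTop (𝓝 (∫ x, ∑ i, w₀ x i * h x i ∂μ)))
    (hg : MemLp g 2 μ) :
    Tendsto (fun n => ∫ x, σ n x * ∑ i, w n x i * g x i ∂μ) atTop
      (𝓝 (∫ x, σ₀ x * ∑ i, w₀ x i * g x i ∂μ)) := by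
  have hdiffC : ∀ n, ∀ᵐ x ∂μ, |σ n x - σ₀ x| ≤ C + C := fun n => by
    filter_upwards [hC n, hC₀] with x hx hx₀
    exact (abs_sub _ _).trans (add_le_add hx hx₀)
  have hmain : Tendsto (fun n => ∫ x, σ₀ x * ∑ i, w n x i * g x i ∂μ) atTop
      (𝓝 (∫ x, σ₀ x * ∑ i, w₀ x i * g x i ∂μ)) := by
    simpa only [Pi.smul_apply', PiLp.smul_apply, smul_eq_mul, Finset.mul_sum, mul_left_comm]
      using hweak _ (hg.smul (memLp_top_of_bound hσ₀m C hC₀))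
  have hrest : Tendsto (fun n => ∫ x, (σ n x - σ₀ x) * ∑ i, w n x i * g x i ∂μ) atTop (𝓝 0) := by
    refine tendsto_integral_of_abs_le_mul (a := fun n x => (σ n x - σ₀ x) * ‖g x‖)
      (b := fun n x => ‖w n x‖) (fun n => ?_) (fun n => (hw n).norm) (fun n => ?_)
      (tendsto_integral_sq_mul_of_tendstoInMeasure hσ hσm hσ₀m hdiffC hg.norm) hM
    · exact hg.norm.smul (memLp_top_of_bound ((hσm n).sub hσ₀m) (C + C) (hdiffC n))
    · refine .of_forall fun x => ?_
      simp only [abs_mul, abs_norm, mul_assoc]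
      gcongr
      exact (abs_sum_mul_le_norm_mul_norm (w n x) (g x)).trans_eq (mul_comm _ _)
  have hsplit : ∀ n, ∫ x, σ₀ x * ∑ i, w n x i * g x i ∂μ
      + ∫ x, (σ n x - σ₀ x) * ∑ i, w n x i * g x i ∂μ
      = ∫ x, σ n x * ∑ i, w n x i * g x i ∂μ := fun n => by
    have hS := integrable_sum_mul_of_memLp (hw n) hg
    refine (integral_add (hS.bdd_mul hσ₀m hC₀)
      (hS.bdd_mul ((hσm n).sub hσ₀m) (hdiffC n))).symm.trans (integral_congr_ae ?_)
    exact .of_forall fun x => by simp only [Pi.sub_apply, ← add_mul, add_sub_cancel]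
  simpa only [add_zero] using (hmain.add hrest).congr hsplit

end EuclideanDot

section BoundaryTerms

variable {α : Type*} [MeasurableSpace α] {μ : Measure α} [IsFiniteMeasure μ]

theorem integral_sub_const_mul {u w : α → ℝ} (c : ℝ) (hu : MemLp u 2 μ) (hw : MemLp w 2 μ) :
    ∫ x, (u x - c) * w x ∂μ = ∫ x, u x * w x ∂μ - c * ∫ x, w x ∂μ := by
  simp_rw [sub_mul]
  rw [integral_sub (f := fun x => u x * w x) (hu.integrable_mul hw)
    ((hw.integrable one_le_two).const_mul c), integral_const_mul]

theorem tendsto_integral_sub_mul {ι : Type*} {l : Filter ι} {u : ι → α → ℝ} {u₀ w : α → ℝ}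
    {c : ι → ℝ} {c₀ : ℝ} (hu : ∀ n, MemLp (u n) 2 μ) (hu₀ : MemLp u₀ 2 μ) (hw : MemLp w 2 μ)
    (hweak : Tendsto (fun n => ∫ x, u n x * w x ∂μ) l (𝓝 (∫ x, u₀ x * w x ∂μ)))
    (hc : Tendsto c l (𝓝 c₀)) :
    Tendsto (fun n => ∫ x, (u n x - c n) * w x ∂μ) l (𝓝 (∫ x, (u₀ x - c₀) * w x ∂μ)) := by
  simp only [integral_sub_const_mul _ (hu _) hw, integral_sub_const_mul _ hu₀ hw]
  exact hweak.sub (hc.mul_const _)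

end BoundaryTerms

theorem weak_limit_solves_cem_general (Ω : Set Pt) (L : ℕ)
    (e : Fin L → Set Pt) (hset : ElectrodeSetup Ω e)
    (lam : ℝ)
    (z : Fin L → ℝ)
    (I : Fin L → ℝ)
    (σn : ℕ → Pt → ℝ) (σs : Pt → ℝ)
    (hσn : ∀ n, MemA Ω lam (σn n)) (hσs : MemA Ω lam σs)
    (hL1 : Filter.Tendsto (fun n => ∫ x in Ω, |σn n x - σs x|) Filter.atTop (nhds 0))
    (un : ℕ → Pt → ℝ) (dun : ℕ → Pt → Pt) (Un : ℕ → Fin L → ℝ)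
    (hsol : ∀ n, IsCEMSol Ω e z (σn n) I (un n) (dun n) (Un n))
    (M : ℝ)
    (hbdd : ∀ n, (∫ x in Ω, (un n x) ^ 2) + (∫ x in Ω, ‖dun n x‖ ^ 2) ≤ M)
    (us : Pt → ℝ) (dus : Pt → Pt) (Us : Fin L → ℝ)
    (hmem : MemHH Ω e us dus Us)
    (hwk1 : ∀ w : Pt → Pt, MemLp w 2 (volume.restrict Ω) →
      Filter.Tendsto (fun n => ∫ x in Ω, ∑ i, dun n x i * w x i) Filter.atTop
        (nhds (∫ x in Ω, ∑ i, dus x i * w x i)))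
    (hwk2 : ∀ l, ∀ v : Pt → ℝ, MemLp v 2 (μH[1].restrict (e l)) →
      Filter.Tendsto (fun n => ∫ x in e l, un n x * v x ∂μH[1]) Filter.atTop
        (nhds (∫ x in e l, us x * v x ∂μH[1])))
    (hU : Filter.Tendsto Un Filter.atTop (nhds Us)) :
    IsCEMSol Ω e z σs I us dus Us := by
  have hbound : ∀ σ, MemA Ω lam σ → ∀ᵐ x ∂volume.restrict Ω, |σ x| ≤ max |lam| |lam⁻¹| :=
    fun σ hσ => hσ.2.mono fun x hx => abs_le_max_abs_abs hx.1 hx.2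
  have hσ : TendstoInMeasure (volume.restrict Ω) σn atTop σs :=
    tendstoInMeasure_of_tendsto_integral_abs_sub (fun n => (hσn n).1.1) hσs.1.1 hL1
  have hgrad : ∀ n, ∫ x in Ω, ‖dun n x‖ ^ 2 ≤ M := fun n =>
    (le_add_of_nonneg_left (integral_nonneg fun x => sq_nonneg _)).trans (hbdd n)
  refine ⟨hmem, fun v dv V hv => tendsto_nhds_unique (l := atTop) ?_
    (tendsto_const_nhds.congr fun n => ((hsol n).2 v dv V hv).symm)⟩
  have hinterior := tendsto_integral_mul_sum_mul_of_tendstoInMeasure hσ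
    (fun n => (hσn n).1.1.1) hσs.1.1.1 (fun n => hbound _ (hσn n)) (hbound _ hσs)
    (fun n => (hsol n).1.1.2.1) hgrad hwk1 hv.1.2.1
  have helectrode : ∀ l, Tendsto (fun n => ∫ x in e l, (un n x - Un n l) * (v x - V l) ∂μH[1])
      atTop (𝓝 (∫ x in e l, (us x - Us l) * (v x - V l) ∂μH[1])) := fun l => by
    have : IsFiniteMeasure (μH[1].restrict (e l)) :=
      isFiniteMeasure_restrict.2 (hset.2.2.2.2.2 l).2.ne
    have hvl := (hv.2.1 l).sub (memLp_const (V l))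
    exact tendsto_integral_sub_mul (fun n => (hsol n).1.2.1 l) (hmem.2.1 l) hvl
      (hwk2 l _ hvl) (tendsto_pi_nhds.1 hU l)
  exact hinterior.add (tendsto_finsetSum _ fun l _ => (helectrode l).const_mul _)

/-- if σ_n → σ* in L¹, the CEM solutions (u_n, U_n) = F(σ_n) are
bounded in H¹, u_n ⇀ u* weakly in H¹(Ω) (including weak convergence of the
traces on the electrodes) and U_n → U*, then (u*,U*) = F(σ*). -/
theorem weak_limit_solves_cem (Ω : Set Pt) (L : ℕ) (hL : 0 < L)
    (e : Fin L → Set Pt) (hset : ElectrodeSetup Ω e)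
    (lam : ℝ) (hlam₀ : 0 < lam) (hlam₁ : lam < 1)
    (z : Fin L → ℝ) (hz : ∀ l, 0 < z l)
    (I : Fin L → ℝ) (hI : ∑ l, I l = 0)
    (σn : ℕ → Pt → ℝ) (σs : Pt → ℝ)
    (hσn : ∀ n, MemA Ω lam (σn n)) (hσs : MemA Ω lam σs)
    (hL1 : Filter.Tendsto (fun n => ∫ x in Ω, |σn n x - σs x|) Filter.atTop (nhds 0))
    (un : ℕ → Pt → ℝ) (dun : ℕ → Pt → Pt) (Un : ℕ → Fin L → ℝ)
    (hsol : ∀ n, IsCEMSol Ω e z (σn n) I (un n) (dun n) (Un n))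
    (M : ℝ)
    (hbdd : ∀ n, (∫ x in Ω, (un n x) ^ 2) + (∫ x in Ω, ‖dun n x‖ ^ 2) ≤ M)
    (us : Pt → ℝ) (dus : Pt → Pt) (Us : Fin L → ℝ)
    (hmem : MemHH Ω e us dus Us)
    (hwk0 : ∀ v : Pt → ℝ, MemLp v 2 (volume.restrict Ω) →
      Filter.Tendsto (fun n => ∫ x in Ω, un n x * v x) Filter.atTop
        (nhds (∫ x in Ω, us x * v x)))
    (hwk1 : ∀ w : Pt → Pt, MemLp w 2 (volume.restrict Ω) →
      Filter.Tendsto (fun n => ∫ x in Ω, ∑ i, dun n x i * w x i) Filter.atTop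
        (nhds (∫ x in Ω, ∑ i, dus x i * w x i)))
    (hwk2 : ∀ l, ∀ v : Pt → ℝ, MemLp v 2 (μH[1].restrict (e l)) →
      Filter.Tendsto (fun n => ∫ x in e l, un n x * v x ∂μH[1]) Filter.atTop
        (nhds (∫ x in e l, us x * v x ∂μH[1])))
    (hU : Filter.Tendsto Un Filter.atTop (nhds Us)) :
    IsCEMSol Ω e z σs I us dus Us :=
  weak_limit_solves_cem_general Ω L e hset lam z I σn σs hσn hσs hL1 un dun Un hsol M hbdd us dus Us
    hmem hwk1 hwk2 hU
end
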